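/- Let X be a set and n ≥ 0. For m ≥ 0, write S^m(X) := X^m/Σ_m for the m-th symmetric power of the set X, and let P_n be the set of tuples (n_1,…,n_n) of non-negative integers with n_1·1 + n_2·2 + ⋯ + n_n·n = n. Let Σ_n act on X^n by permuting coordinates, and consider the extended quotient X^n/^ex Σ_n := {(σ, x) ∈ Σ_n × X^n : σ·x = x}/Σ_n, where Σ_n acts diagonally, by conjugation on the first factor. Then there is a bijection X^n/^ex Σ_n ≅ ∐_{(n_1,…,n_n) ∈ P_n} S^{n_1}(X) × S^{n_2}(X) × ⋯ × S^{n_n}(X). -/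

import Mathlib

/-!
A pair `(σ, x)` in the inertia is a permutation of `Fin n` together with a coloring `x` that is
constant on the cycles of `σ`. Splitting `Fin n` into the `σ`-orbits, each orbit is a copy of
`ZMod ℓ` on which `σ` acts by `+1`, so `(σ, x)` is conjugate to a disjoint union of colored
rotations, and two pairs are conjugate exactly when they have the same multiset of
(cycle length, color). Grouping that multiset by cycle length gives a partition
`(n_1, …, n_n)` of `n` and, for each length `i`, an unordered `n_i`-tuple of colors.
-/

open Equiv

/-- The setoid on `X^m` whose quotient is the `m`-th symmetric power of the set `X`. -/
def symSetoid (X : Type) (m : ℕ) : Setoid (Fin m → X) where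
  r x y := ∃ σ : Equiv.Perm (Fin m), ∀ i, y i = x (σ i)
  iseqv := by
    constructor
    · exact fun x => ⟨1, fun i => rfl⟩
    · rintro x y ⟨σ, h⟩
      exact ⟨σ⁻¹, fun i => by rw [h (σ⁻¹ i)]; simp⟩
    · rintro x y z ⟨σ, h⟩ ⟨σ', h'⟩
      exact ⟨σ * σ', fun i => by rw [h' i, h (σ' i)]; simp⟩

/-- The `m`-th symmetric power `S^m(X) = X^m / Σ_m` of a set `X`. -/
def SymPow (X : Type) (m : ℕ) : Type := Quotient (symSetoid X m)

/-- The inertia of the action of `Σ_n` on `X^n`: pairs `(σ, x)` with `σ • x = x`,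
where `σ • x = x ∘ σ⁻¹`. -/
def InertiaPow (X : Type) (n : ℕ) : Type :=
  {p : Equiv.Perm (Fin n) × (Fin n → X) // ∀ i, p.2 (p.1⁻¹ i) = p.2 i}

/-- The setoid on the inertia whose quotient is the extended quotient `X^n /^ex Σ_n`:
`(σ, x) ∼ (τστ⁻¹, τ • x)`. -/
def extSetoid (X : Type) (n : ℕ) : Setoid (InertiaPow X n) where
  r p q := ∃ τ : Equiv.Perm (Fin n), q.1.1 = τ * p.1.1 * τ⁻¹ ∧ ∀ i, q.1.2 i = p.1.2 (τ⁻¹ i)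
  iseqv := by
    constructor
    · exact fun p => ⟨1, by simp, fun i => by simp⟩
    · rintro p q ⟨τ, h1, h2⟩
      refine ⟨τ⁻¹, by rw [h1]; group, fun i => ?_⟩
      rw [inv_inv, h2 (τ i)]
      simp
    · rintro p q r ⟨τ, h1, h2⟩ ⟨τ', h1', h2'⟩
      refine ⟨τ' * τ, by rw [h1', h1]; group, fun i => ?_⟩
      rw [h2' i, h2 (τ'⁻¹ i)]
      simp [mul_inv_rev]

/-- The extended quotient `X^n /^ex Σ_n`. -/
def ExtQuotPow (X : Type) (n : ℕ) : Type := Quotient (extSetoid X n)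

/-- The set of partitions of `n`, recorded as tuples `(n_1, …, n_n)` of non-negative
integers with `n_1·1 + n_2·2 + ⋯ + n_n·n = n`. -/
def PartTuples (n : ℕ) : Type := {v : Fin n → ℕ // ∑ i : Fin n, v i * (i.1 + 1) = n}

open Function MulAction Subgroup Finset

theorem exists_equiv_of_map_univ_eq {A B Z : Type*} [Fintype A] [Fintype B] {f : A → Z}
    {g : B → Z} (h : univ.val.map f = univ.val.map g) : ∃ e : A ≃ B, ∀ a, g (e a) = f a := by
  classical
  have hfib (z : Z) : Fintype.card {a // f a = z} = Fintype.card {b // g b = z} := by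
    have := congrArg (Multiset.count z) h
    simp only [Multiset.count_map, eq_comm (a := z)] at this
    rw [Fintype.card_subtype, Fintype.card_subtype]
    exact this
  exact ⟨ofFiberEquiv fun z => Fintype.equivOfCardEq (hfib z), ofFiberEquiv_map _⟩

namespace MulAction

theorem mem_orbit_zpowers_iff {G α : Type*} [Group G] [MulAction G α] {g : G} {a b : α} :
    a ∈ orbit (zpowers g) b ↔ ∃ k : ℤ, g ^ k • b = a := by
  simp only [mem_orbit_iff, Subtype.exists, Subgroup.mk_smul, mem_zpowers_iff, exists_prop,
    exists_exists_eq_and]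

theorem minimalPeriod_smul_eq_of_forall {G α : Type*} [Group G] [MulAction G α] {g : G} {a : α}
    {m : ℕ} (h : ∀ k : ℤ, g ^ k • a = a ↔ (m : ℤ) ∣ k) : minimalPeriod (g • ·) a = m := by
  have hdvd (k : ℤ) : (minimalPeriod (g • ·) a : ℤ) ∣ k ↔ (m : ℤ) ∣ k :=
    zpow_smul_eq_iff_minimalPeriod_dvd.symm.trans (h k)
  exact Int.natCast_inj.1 (Int.dvd_antisymm (by positivity) (by positivity)
    ((hdvd m).2 dvd_rfl) ((hdvd _).1 dvd_rfl))

end MulAction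

namespace Multiset
variable {ι κ X : Type*}

theorem map_pair_map_snd {t : Multiset (κ × X)} {k : κ} (h : ∀ p ∈ t, p.1 = k) :
    (t.map Prod.snd).map (k, ·) = t := by
  rw [map_map]
  conv_rhs => rw [← map_id t]
  exact map_congr rfl fun p hp => by rw [← h p hp]; rfl

theorem filter_sum {α : Type*} (s : Finset ι) (f : ι → Multiset α) (p : α → Prop)
    [DecidablePred p] :
    (∑ i ∈ s, f i).filter p = ∑ i ∈ s, (f i).filter p :=
  map_sum (⟨⟨filter p, filter_zero p⟩, filter_add p⟩ : Multiset α →+ Multiset α) f s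

variable [DecidableEq κ] [Fintype ι] {j : ι → κ}

theorem sum_filter_fst_eq_self (hj : Injective j) {s : Multiset (κ × X)}
    (hs : ∀ p ∈ s, p.1 ∈ Set.range j) : ∑ i, s.filter (·.1 = j i) = s := by
  induction s using Multiset.induction with
  | empty => simp
  | cons p s ih =>
    obtain ⟨i₀, hi₀⟩ := hs p (mem_cons_self p s)
    have hsingle : ∑ i, (if p.1 = j i then {p} else 0 : Multiset (κ × X)) = {p} := by
      rw [Finset.sum_eq_single i₀ (fun i _ hi => if_neg fun h => hi (hj (hi₀.trans h)).symm)
        (by simp), if_pos hi₀.symm]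
    simp only [filter_cons, Finset.sum_add_distrib, hsingle,
      ih fun q hq => hs q (mem_cons_of_mem hq), singleton_add]

theorem filter_fst_sum_map_pair (hj : Injective j) (f : ι → Multiset X) (i : ι) :
    (∑ i', (f i').map (j i', ·)).filter (·.1 = j i) = (f i).map (j i, ·) := by
  rw [filter_sum, Finset.sum_eq_single i (fun i' _ hi' => ?_) (by simp), filter_eq_self.2 ?_]
  · intro p hp
    obtain ⟨a, -, rfl⟩ := mem_map.1 hp
    rfl
  · refine filter_eq_nil.2 fun p hp => ?_
    obtain ⟨a, -, rfl⟩ := mem_map.1 hp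
    exact fun h => hi' (hj h)

end Multiset

def totalLength {X : Type*} : Multiset (ℕ+ × X) →+ ℕ :=
  Multiset.sumAddMonoidHom.comp (Multiset.mapAddMonoidHom fun p => (p.1 : ℕ))

theorem totalLength_apply {X : Type*} (s : Multiset (ℕ+ × X)) :
    totalLength s = (s.map fun p => (p.1 : ℕ)).sum := rfl

theorem totalLength_map_pair {X : Type*} (t : Multiset X) (k : ℕ+) :
    totalLength (t.map (k, ·)) = Multiset.card t * k := by
  simp [totalLength_apply, Multiset.map_map, Multiset.map_const', Multiset.sum_replicate]

theorem fst_mem_range_succPNat {X : Type*} {n : ℕ} {s : Multiset (ℕ+ × X)}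
    (hs : totalLength s = n) {p : ℕ+ × X} (hp : p ∈ s) :
    p.1 ∈ Set.range fun i : Fin n => (i : ℕ).succPNat := by
  have hle : (p.1 : ℕ) ≤ n :=
    hs ▸ Multiset.le_sum_of_mem (Multiset.mem_map_of_mem (fun p : ℕ+ × X => (p.1 : ℕ)) hp)
  refine ⟨⟨p.1.natPred, ?_⟩, p.1.succPNat_natPred⟩
  have := p.1.natPred_add_one
  omega

@[ext]
structure ColoredPerm (X α : Type*) where
  perm : Perm α
  color : α → X
  color_perm : ∀ a, color (perm a) = color a

namespace ColoredPerm

variable {X α β γ : Type*}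

def map (P : ColoredPerm X α) (e : α ≃ β) : ColoredPerm X β where
  perm := e.permCongr P.perm
  color := P.color ∘ e.symm
  color_perm b := by simp [P.color_perm]

@[simp]
theorem map_refl (P : ColoredPerm X α) : P.map (Equiv.refl α) = P := rfl

theorem map_map (P : ColoredPerm X α) (e : α ≃ β) (f : β ≃ γ) :
    (P.map e).map f = P.map (e.trans f) := rfl

theorem map_perm_zpow (P : ColoredPerm X α) (e : α ≃ β) (k : ℤ) :
    (P.map e).perm ^ k = e.permCongr (P.perm ^ k) :=
  (map_zpow e.permCongrHom P.perm k).symm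

theorem color_zpow_smul (P : ColoredPerm X α) (k : ℤ) (a : α) :
    P.color (P.perm ^ k • a) = P.color a := by
  induction k using Int.induction_on generalizing a with
  | zero => simp
  | succ k ih => rw [zpow_add_one, mul_smul, ih, Perm.smul_def, P.color_perm]
  | pred k ih =>
    rw [zpow_sub_one, mul_smul, ih, ← P.color_perm, ← Perm.smul_def, smul_inv_smul]

theorem color_eq_of_mem_orbit (P : ColoredPerm X α) {a b : α}
    (h : a ∈ orbit (zpowers P.perm) b) : P.color a = P.color b := by
  obtain ⟨j, rfl⟩ := mem_orbit_zpowers_iff.1 h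
  exact P.color_zpow_smul j b

def ofCycles {Q : Type*} (ℓ : Q → ℕ+) (c : Q → X) : ColoredPerm X (Σ q, ZMod (ℓ q)) where
  perm := Perm.sigmaCongrRight fun _ => Equiv.addRight 1
  color s := c s.1
  color_perm _ := rfl

theorem ofCycles_smul {Q : Type*} (ℓ : Q → ℕ+) (c : Q → X) (q : Q) (z : ZMod (ℓ q)) :
    (ofCycles ℓ c).perm • (⟨q, z⟩ : Σ q, ZMod (ℓ q)) = ⟨q, z + 1⟩ := rfl

theorem ofCycles_zpow_smul {Q : Type*} (ℓ : Q → ℕ+) (c : Q → X) (k : ℤ) (q : Q)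
    (z : ZMod (ℓ q)) :
    (ofCycles ℓ c).perm ^ k • (⟨q, z⟩ : Σ q, ZMod (ℓ q)) = ⟨q, z + k⟩ := by
  induction k using Int.induction_on generalizing z with
  | zero => simp
  | succ k ih =>
    rw [zpow_add_one, mul_smul, ofCycles_smul, ih]
    push_cast
    ring_nf
  | pred k ih =>
    have hinv : (ofCycles ℓ c).perm⁻¹ • (⟨q, z⟩ : Σ q, ZMod (ℓ q)) = ⟨q, z - 1⟩ :=
      inv_smul_eq_iff.2 (by rw [ofCycles_smul, sub_add_cancel])
    rw [zpow_sub_one, mul_smul, hinv, ih]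
    push_cast
    ring_nf

theorem exists_ofCycles_map_eq_ofCycles {Q Q' : Type*} {ℓ : Q → ℕ+} {c : Q → X} {ℓ' : Q' → ℕ+}
    {c' : Q' → X} (b : Q ≃ Q') (hℓ : ∀ q, ℓ' (b q) = ℓ q) (hc : ∀ q, c' (b q) = c q) :
    ∃ e : (Σ q, ZMod (ℓ q)) ≃ Σ q', ZMod (ℓ' q'), (ofCycles ℓ c).map e = ofCycles ℓ' c' := by
  let e : (Σ q, ZMod (ℓ q)) ≃ Σ q', ZMod (ℓ' q') :=
    b.sigmaCongr fun q => (ZMod.ringEquivCongr (congrArg PNat.val (hℓ q).symm)).toEquiv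
  have he (q : Q) (z : ZMod (ℓ q)) :
      e ⟨q, z⟩ = ⟨b q, ZMod.ringEquivCongr (congrArg PNat.val (hℓ q).symm) z⟩ := rfl
  refine ⟨e, ColoredPerm.ext (Equiv.ext fun s => ?_) (funext fun s => ?_)⟩ <;>
    obtain ⟨⟨q, z⟩, rfl⟩ := e.surjective s
  · show e ((ofCycles ℓ c).perm (e.symm (e ⟨q, z⟩))) = _
    rw [e.symm_apply_apply, ← Perm.smul_def, ofCycles_smul, he, he, ← Perm.smul_def, ofCycles_smul,
      map_add, map_one]
  · show c (e.symm (e ⟨q, z⟩)).1 = c' (e ⟨q, z⟩).1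
    rw [e.symm_apply_apply, he, hc]

section Cycles

variable [Fintype α] (P : ColoredPerm X α)

abbrev Cycles : Type _ := orbitRel.Quotient (zpowers P.perm) α

noncomputable instance : Fintype P.Cycles := Fintype.ofFinite _

noncomputable def period (a : α) : ℕ+ :=
  ⟨minimalPeriod (P.perm • ·) a, (minimalPeriod_pos P.perm a).pos⟩

noncomputable def cycleData : Multiset (ℕ+ × X) :=
  univ.val.map fun ω : P.Cycles => (P.period ω.out, P.color ω.out)

theorem zpow_smul_eq_self_iff {a : α} {k : ℤ} : P.perm ^ k • a = a ↔ (P.period a : ℤ) ∣ k :=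
  zpow_smul_eq_iff_minimalPeriod_dvd

theorem period_eq_of_forall {a : α} {m : ℕ} (h : ∀ k : ℤ, P.perm ^ k • a = a ↔ (m : ℤ) ∣ k) :
    (P.period a : ℕ) = m :=
  minimalPeriod_smul_eq_of_forall h

theorem period_eq_of_mem_orbit {a b : α} (h : a ∈ orbit (zpowers P.perm) b) :
    P.period a = P.period b := by
  obtain ⟨j, rfl⟩ := mem_orbit_zpowers_iff.1 h
  refine PNat.coe_injective (P.period_eq_of_forall fun k => ?_)
  rw [← P.zpow_smul_eq_self_iff, ← mul_smul, ← zpow_add, add_comm, zpow_add, mul_smul,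
    smul_left_cancel_iff]

theorem period_map [Fintype β] (e : α ≃ β) (b : β) :
    (P.map e).period b = P.period (e.symm b) := by
  refine PNat.coe_injective ((P.map e).period_eq_of_forall fun k => ?_)
  rw [← P.zpow_smul_eq_self_iff, map_perm_zpow, Perm.smul_def, permCongr_apply,
    ← e.eq_symm_apply, Perm.smul_def]

theorem cycleData_eq_of_fibers_eq_orbits {Q : Type*} [Fintype Q] (π : α → Q) (hπ : Surjective π)
    (hfib : ∀ a b, π a = π b ↔ a ∈ orbit (zpowers P.perm) b) (g : Q → ℕ+ × X)
    (hg : ∀ a, g (π a) = (P.period a, P.color a)) : P.cycleData = univ.val.map g := by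
  let φ : P.Cycles → Q := Quotient.lift π fun a b h => (hfib a b).2 h
  have hφ : Bijective φ :=
    ⟨fun ω ω' => Quotient.inductionOn₂ ω ω' fun a b h => Quotient.sound ((hfib a b).1 h),
      fun q => (hπ q).elim fun a h => ⟨Quotient.mk _ a, h⟩⟩
  rw [← Multiset.map_univ_val_equiv (Equiv.ofBijective φ hφ), Multiset.map_map, cycleData]
  congr 1
  funext ω
  conv_rhs => rw [← Quotient.out_eq ω]
  exact (hg ω.out).symm

theorem cycleData_map [Fintype β] (e : α ≃ β) : (P.map e).cycleData = P.cycleData := by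
  refine (P.map e).cycleData_eq_of_fibers_eq_orbits (fun b => Quotient.mk _ (e.symm b))
    (fun ω => ⟨e ω.out, by simp⟩) (fun a b => ?_) (fun ω => (P.period ω.out, P.color ω.out))
    (fun b => ?_)
  · rw [Quotient.eq, orbitRel_apply, mem_orbit_zpowers_iff, mem_orbit_zpowers_iff]
    refine exists_congr fun k => ?_
    rw [map_perm_zpow, Perm.smul_def, Perm.smul_def, permCongr_apply, ← e.eq_symm_apply]
  · have hout := Quotient.mk_out (s := orbitRel (zpowers P.perm) α) (e.symm b)
    rw [P.period_eq_of_mem_orbit hout, P.color_eq_of_mem_orbit hout, period_map]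
    rfl

theorem exists_ofCycles_map_eq :
    ∃ e : (Σ ω : P.Cycles, ZMod (P.period ω.out)) ≃ α,
      (ofCycles (fun ω : P.Cycles => P.period ω.out) fun ω => P.color ω.out).map e = P := by
  let e : (Σ ω : P.Cycles, ZMod (P.period ω.out)) ≃ α :=
    ((selfEquivSigmaOrbits (zpowers P.perm) α).trans
      (sigmaCongrRight fun ω => orbitZPowersEquiv P.perm ω.out)).symm
  have he (ω : P.Cycles) (k : ℤ) : e ⟨ω, k⟩ = P.perm ^ k • ω.out := by
    show ((orbitZPowersEquiv P.perm ω.out).symm k : α) = _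
    rw [orbitZPowersEquiv_symm_apply']
    rfl
  have hsurj (a : α) : ∃ (ω : P.Cycles) (k : ℤ), e ⟨ω, k⟩ = a := by
    obtain ⟨⟨ω, z⟩, rfl⟩ := e.surjective a
    exact ⟨ω, (z.cast : ℤ), by rw [ZMod.intCast_zmod_cast]⟩
  set R := ofCycles (fun ω : P.Cycles => P.period ω.out) fun ω => P.color ω.out
  refine ⟨e, ColoredPerm.ext (Equiv.ext fun a => ?_) (funext fun a => ?_)⟩ <;>
    obtain ⟨ω, k, rfl⟩ := hsurj a
  · show e (R.perm (e.symm (e ⟨ω, k⟩))) = _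
    rw [e.symm_apply_apply, ← Perm.smul_def, ofCycles_smul, ← Int.cast_one, ← Int.cast_add,
      add_comm, he, he, zpow_one_add, mul_smul, Perm.smul_def]
  · show P.color ((e.symm (e ⟨ω, k⟩)).1.out) = _
    rw [e.symm_apply_apply, he, P.color_zpow_smul]

theorem card_eq_totalLength_cycleData : Fintype.card α = totalLength P.cycleData := by
  obtain ⟨e, -⟩ := P.exists_ofCycles_map_eq
  rw [← Fintype.card_congr e, Fintype.card_sigma, totalLength_apply, cycleData, Multiset.map_map]
  simp only [ZMod.card]
  rfl

end Cycles

theorem exists_map_eq_of_cycleData_eq [Fintype α] [Fintype β] {P : ColoredPerm X α}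
    {P' : ColoredPerm X β} (h : P.cycleData = P'.cycleData) : ∃ e : α ≃ β, P.map e = P' := by
  obtain ⟨b, hb⟩ := exists_equiv_of_map_univ_eq h
  obtain ⟨f, hf⟩ := exists_ofCycles_map_eq_ofCycles (ℓ := fun ω => P.period ω.out)
    (c := fun ω => P.color ω.out) (ℓ' := fun ω => P'.period ω.out)
    (c' := fun ω => P'.color ω.out) b (fun ω => congrArg Prod.fst (hb ω))
    (fun ω => congrArg Prod.snd (hb ω))
  obtain ⟨e, he⟩ := P.exists_ofCycles_map_eq
  obtain ⟨e', he'⟩ := P'.exists_ofCycles_map_eq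
  refine ⟨e.symm.trans (f.trans e'), ?_⟩
  calc P.map (e.symm.trans (f.trans e'))
      _ = (((ofCycles _ _).map e).map (e.symm.trans (f.trans e'))) := by rw [he]
      _ = ((ofCycles _ _).map f).map e' := by
        rw [map_map, map_map, ← Equiv.trans_assoc, Equiv.self_trans_symm, Equiv.refl_trans]
      _ = P' := by rw [hf, he']

theorem cycleData_ofCycles {Q : Type*} [Fintype Q] (ℓ : Q → ℕ+) (c : Q → X) :
    (ofCycles ℓ c).cycleData = univ.val.map fun q => (ℓ q, c q) := by
  refine (ofCycles ℓ c).cycleData_eq_of_fibers_eq_orbits Sigma.fst (fun q => ⟨⟨q, 0⟩, rfl⟩)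
    (fun s t => ?_) _ (fun s => ?_)
  · rw [mem_orbit_zpowers_iff]
    obtain ⟨q, z⟩ := s
    obtain ⟨q', z'⟩ := t
    constructor
    · rintro (rfl : q = q')
      refine ⟨((z - z' : ZMod (ℓ q)).cast : ℤ), ?_⟩
      rw [ofCycles_zpow_smul, ZMod.intCast_zmod_cast, add_sub_cancel]
    · rintro ⟨k, hk⟩
      rw [ofCycles_zpow_smul] at hk
      exact (congrArg Sigma.fst hk).symm
  · obtain ⟨q, z⟩ := s
    have hper : ((ofCycles ℓ c).period ⟨q, z⟩ : ℕ) = ℓ q :=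
      (ofCycles ℓ c).period_eq_of_forall fun k => by
        rw [ofCycles_zpow_smul]
        simp [ZMod.intCast_zmod_eq_zero_iff_dvd]
    rw [PNat.coe_injective hper]
    rfl

theorem exists_cycleData_eq [Fintype α] (s : Multiset (ℕ+ × X))
    (hs : totalLength s = Fintype.card α) : ∃ P : ColoredPerm X α, P.cycleData = s := by
  classical
  let R := ofCycles (fun x : s.ToType => (x : ℕ+ × X).1) fun x => (x : ℕ+ × X).2
  have hR : R.cycleData = s := by
    rw [cycleData_ofCycles]
    exact Multiset.map_univ_coe s
  have hcard : Fintype.card (Σ x : s.ToType, ZMod (x : ℕ+ × X).1) = Fintype.card α := by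
    rw [R.card_eq_totalLength_cycleData, hR, hs]
  exact ⟨R.map (Fintype.equivOfCardEq hcard), by rw [cycleData_map, hR]⟩

def conjSetoid (X α : Type*) : Setoid (ColoredPerm X α) where
  r P Q := ∃ e : Perm α, P.map e = Q
  iseqv :=
    ⟨fun P => ⟨Equiv.refl α, P.map_refl⟩,
      fun ⟨e, h⟩ => ⟨e.symm, by rw [← h, map_map, self_trans_symm, map_refl]⟩,
      fun ⟨e, h⟩ ⟨f, h'⟩ => ⟨e.trans f, by rw [← map_map, h, h']⟩⟩

noncomputable def quotientConjEquiv (X α : Type*) [Fintype α] :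
    Quotient (conjSetoid X α) ≃ {s : Multiset (ℕ+ × X) // totalLength s = Fintype.card α} :=
  Equiv.ofBijective
    (Quotient.lift (fun P => ⟨P.cycleData, P.card_eq_totalLength_cycleData.symm⟩)
      fun P _ ⟨e, h⟩ => Subtype.ext (h ▸ P.cycleData_map e).symm)
    ⟨fun a b => Quotient.inductionOn₂ a b fun _ _ h =>
        Quotient.sound (exists_map_eq_of_cycleData_eq (congrArg Subtype.val h)),
      fun ⟨s, hs⟩ =>
        let ⟨P, hP⟩ := exists_cycleData_eq s hs
        ⟨Quotient.mk _ P, Subtype.ext hP⟩⟩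

end ColoredPerm

noncomputable def totalLengthEquivFinTuples (X : Type*) (n : ℕ) :
    {s : Multiset (ℕ+ × X) // totalLength s = n} ≃
      {f : Fin n → Multiset X // ∑ i : Fin n, Multiset.card (f i) * (i + 1) = n} :=
  have hj : Injective fun i : Fin n => (i : ℕ).succPNat :=
    Nat.succPNat_injective.comp Fin.val_injective
  have hfilter (s : Multiset (ℕ+ × X)) (i : Fin n) :
      ((s.filter (·.1 = (i : ℕ).succPNat)).map Prod.snd).map ((i : ℕ).succPNat, ·) =
        s.filter (·.1 = (i : ℕ).succPNat) :=
    Multiset.map_pair_map_snd fun _ hp => (Multiset.mem_filter.1 hp).2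
  -- the entry at `i : Fin n` collects the cycles of length `i + 1`
  { toFun s := ⟨fun i => (s.1.filter (·.1 = (i : ℕ).succPNat)).map Prod.snd, by
      calc _ = ∑ i : Fin n, totalLength (s.1.filter (·.1 = (i : ℕ).succPNat)) :=
            Finset.sum_congr rfl fun i _ => by
              conv_rhs => rw [← hfilter s.1 i]
              rw [totalLength_map_pair]
              rfl
        _ = n := by
          rw [← map_sum, Multiset.sum_filter_fst_eq_self hj fun p => fst_mem_range_succPNat s.2,
            s.2]⟩
    invFun f := ⟨∑ i, (f.1 i).map ((i : ℕ).succPNat, ·), by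
      rw [map_sum]
      refine (Finset.sum_congr rfl fun i _ => ?_).trans f.2
      rw [totalLength_map_pair]
      rfl⟩
    left_inv s := Subtype.ext <| by
      simp only [hfilter]
      exact Multiset.sum_filter_fst_eq_self hj fun p => fst_mem_range_succPNat s.2
    right_inv f := Subtype.ext <| funext fun i => by
      simp only [Multiset.filter_fst_sum_map_pair hj, Multiset.map_map]
      exact Multiset.map_id' (f.1 i) }

def subtypePiMultisetEquivSigmaSym (X : Type*) {ι : Type*} (p : (ι → ℕ) → Prop) :
    {f : ι → Multiset X // p fun i => Multiset.card (f i)} ≃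
      Σ v : {v : ι → ℕ // p v}, ∀ i, Sym X (v.1 i) :=
  (sigmaSubtypeFiberEquivSubtype (fun (f : ι → Multiset X) i => Multiset.card (f i))
    (q := p) fun _ => Iff.rfl).symm.trans
    (sigmaCongrRight fun v =>
      (subtypeEquivRight fun _ => funext_iff).trans
        (subtypePiEquivPi (p := fun i s => Multiset.card s = v.1 i)))

noncomputable def symPowEquivSym (X : Type) (m : ℕ) : SymPow X m ≃ Sym X m := by
  refine Equiv.ofBijective (Quotient.lift (fun x => ⟨univ.val.map x, by simp⟩) ?_) ⟨?_, ?_⟩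
  · rintro x y ⟨σ, hσ⟩
    refine Subtype.ext ?_
    change univ.val.map x = univ.val.map y
    rw [show y = x ∘ σ from funext hσ, ← Multiset.map_map, Multiset.map_univ_val_equiv]
  · refine fun a b => Quotient.inductionOn₂ a b fun x y h => Quotient.sound ?_
    obtain ⟨e, he⟩ := exists_equiv_of_map_univ_eq (f := x) (g := y) (congrArg Subtype.val h)
    exact ⟨e.symm, fun i => by simpa using he (e.symm i)⟩
  · classical
    rintro ⟨s, hs⟩
    let e : Fin m ≃ s.ToType := Fintype.equivOfCardEq (by simp [hs])
    refine ⟨Quotient.mk _ fun i => (e i : X), Subtype.ext ?_⟩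
    change univ.val.map ((fun x : s.ToType => (x : X)) ∘ e) = s
    rw [← Multiset.map_map, Multiset.map_univ_val_equiv, Multiset.map_univ_coe]

def inertiaEquiv (X : Type) (n : ℕ) : InertiaPow X n ≃ ColoredPerm X (Fin n) where
  toFun p := ⟨p.1.1, p.1.2, fun i => by simpa using (p.2 (p.1.1 i)).symm⟩
  invFun P := ⟨(P.perm, P.color), fun i => by simpa using (P.color_perm (P.perm⁻¹ i)).symm⟩
  left_inv _ := rfl
  right_inv _ := rfl

theorem extSetoid_iff (X : Type) (n : ℕ) (p q : InertiaPow X n) :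
    extSetoid X n p q ↔
      ColoredPerm.conjSetoid X (Fin n) (inertiaEquiv X n p) (inertiaEquiv X n q) :=
  exists_congr fun _ => by
    rw [ColoredPerm.ext_iff, funext_iff]
    exact ⟨fun ⟨h1, h2⟩ => ⟨h1.symm, fun i => (h2 i).symm⟩,
      fun ⟨h1, h2⟩ => ⟨h1.symm, fun i => (h2 i).symm⟩⟩

/-- For a set `X` and `n ≥ 0` there is a bijection
`X^n /^ex Σ_n ≅ ∐_{(n_1,…,n_n) ∈ P_n} S^{n_1}(X) × S^{n_2}(X) × ⋯ × S^{n_n}(X)`. -/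
theorem stmt_18 (X : Type) (n : ℕ) :
    Nonempty (ExtQuotPow X n ≃ Σ v : PartTuples n, ∀ i : Fin n, SymPow X (v.1 i)) :=
  ⟨(Quotient.congr (inertiaEquiv X n) (extSetoid_iff X n)).trans <|
    (ColoredPerm.quotientConjEquiv X (Fin n)).trans <|
    (subtypeEquivRight fun s => by rw [Fintype.card_fin]).trans <|
    (totalLengthEquivFinTuples X n).trans <|
    (subtypePiMultisetEquivSigmaSym X fun v : Fin n → ℕ => ∑ i, v i * (i.1 + 1) = n).trans <|
    sigmaCongrRight fun v => piCongrRight fun i => (symPowEquivSym X (v.1 i)).symm⟩
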